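/- arXiv:1701.07714 — 3 statements merged into one kernel-verified Lean document; each statement's English description precedes it below -/
import Mathlib

section
/- If x₂ ∈ ℂ and Q = (x+2x₂)(x−x₂)² (dx)² (a quadratic differential on ℂP¹ with a double zero at x₂, pole of order 7 at ∞), then the period ∫ from x₂ to −2x₂ of (x−x₂)√(x+2x₂) dx equals (12√3/5) x₂^{5/2} up to sign, and it is real if and only if x₂ lies on one of the five rays e^{2πik/5}·ℝ₊, k = 0,…,4. -/
/-!
Along the segment `x = x₂(1 - 3t)` the period is `9 x₂² (3x₂)^{1/2} B(2, 3/2)`, and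
`B(2, 3/2) = 4/15` gives `(12√3/5) x₂^{5/2}`. The number `w = x₂^{5/2}` is nonzero with
`w² = x₂⁵`, so `w` is real iff `x₂⁵` is a positive real, i.e. iff `x₂ / |x₂|` is a fifth root
of unity.
-/

open Complex

namespace Complex

theorem betaIntegral_two_left {b : ℂ} (hb : 0 < b.re) :
    betaIntegral 2 b = 1 / (b * (b + 1)) := by
  have hrec := betaIntegral_recurrence (v := 1) hb (by simp)
  rw [betaIntegral_eval_one_right (by simpa using hb.trans (lt_add_one _)), one_mul,
    one_add_one_eq_two, betaIntegral_symm] at hrec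
  have hb0 : b ≠ 0 := fun h => by simp [h] at hb
  rw [mul_comm b, ← div_div, ← hrec, mul_div_cancel_left₀ _ hb0]

theorem ofReal_mul_cpow {r : ℝ} (hr : 0 ≤ r) (z w : ℂ) :
    ((r : ℂ) * z) ^ w = (r : ℂ) ^ w * z ^ w := by
  rcases hr.eq_or_lt with rfl | hr
  · rcases eq_or_ne w 0 with rfl | hw <;> simp [zero_cpow, *]
  rcases eq_or_ne z 0 with rfl | hz
  · rcases eq_or_ne w 0 with rfl | hw <;> simp [zero_cpow, *]
  rw [cpow_def_of_ne_zero (mul_ne_zero (ofReal_ne_zero.mpr hr.ne') hz),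
    cpow_def_of_ne_zero (ofReal_ne_zero.mpr hr.ne'), cpow_def_of_ne_zero hz,
    log_ofReal_mul hr hz, ← ofReal_log hr.le, add_mul, exp_add]

-- Under `ComplexOrder`, `0 < z` says that `z` is a positive real.
open scoped ComplexOrder in
theorem im_eq_zero_iff_sq_pos {w : ℂ} (hw : w ≠ 0) : w.im = 0 ↔ 0 < w ^ 2 := by
  rw [pos_iff, sq, mul_re, mul_im]
  constructor
  · intro h
    have : w.re ≠ 0 := fun h' => hw (ext h' h)
    rw [h]
    constructor
    · simpa using mul_self_pos.mpr this
    · ring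
  · rintro ⟨hre, him⟩
    have : w.re * w.im = 0 := by linarith
    rcases mul_eq_zero.mp this with h | h
    · nlinarith
    · exact h

open scoped ComplexOrder in
theorem pow_pos_iff_mem_rays {n : ℕ} (hn : n ≠ 0) {x : ℂ} :
    0 < x ^ n ↔ ∃ k : Fin n, ∃ r : ℝ, 0 < r ∧
      x = r * exp (2 * (Real.pi : ℂ) * I * (k : ℕ) / n) := by
  constructor
  · intro hx
    have : NeZero n := ⟨hn⟩
    obtain ⟨p, hp, hxp⟩ : ∃ p : ℝ, 0 < p ∧ x ^ n = p :=
      ⟨(x ^ n).re, (pos_iff.mp hx).1, ext rfl (by simp [(pos_iff.mp hx).2])⟩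
    set r : ℝ := p ^ (1 / n : ℝ)
    have hr : 0 < r := Real.rpow_pos_of_pos hp _
    have hrn : (r : ℂ) ^ n = p := by
      rw [← ofReal_pow, ← Real.rpow_natCast, ← Real.rpow_mul hp.le,
        one_div_mul_cancel (by exact_mod_cast hn), Real.rpow_one]
    have hunit : (x / r) ^ n = 1 := by
      rw [div_pow, hxp, hrn, div_self (by exact_mod_cast hp.ne')]
    obtain ⟨i, hi, hζ⟩ := (isPrimitiveRoot_exp n hn).eq_pow_of_pow_eq_one hunit
    refine ⟨⟨i, hi⟩, r, hr, ?_⟩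
    rw [← exp_nat_mul, eq_div_iff (by exact_mod_cast hr.ne')] at hζ
    rw [← hζ]
    ring_nf
  · rintro ⟨k, r, hr, rfl⟩
    have hζ : exp (2 * (Real.pi : ℂ) * I * (k : ℕ) / n) ^ n = 1 := by
      rw [← exp_nat_mul, mul_div_cancel₀ _ (by exact_mod_cast hn), mul_comm]
      exact exp_nat_mul_two_pi_mul_I k
    rw [mul_pow, hζ, mul_one, ← ofReal_pow]
    exact_mod_cast pow_pos hr n

end Complex

theorem integral_mul_one_sub_cpow_half :
    ∫ t in (0:ℝ)..1, (t : ℂ) * (1 - (t : ℂ)) ^ ((1 : ℂ) / 2) = 4 / 15 := by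
  have hB := betaIntegral_two_left (b := 3 / 2) (by norm_num)
  rw [betaIntegral] at hB
  norm_num at hB
  exact hB

theorem period_integral_eq (x₂ : ℂ) (hx₂ : x₂ ≠ 0) :
    (∫ t in (0:ℝ)..1,
        ((x₂ * (1 - 3 * (t : ℂ)) - x₂) *
          ((3 * x₂) ^ ((1 : ℂ) / 2) * ((1 : ℂ) - (t : ℂ)) ^ ((1 : ℂ) / 2))) *
          (-3 * x₂)) =
      ((12 * Real.sqrt 3 / 5 : ℝ) : ℂ) * x₂ ^ ((5 : ℂ) / 2) := by
  have hsqrt3 : (3 : ℂ) ^ ((1 : ℂ) / 2) = (Real.sqrt 3 : ℂ) := by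
    rw [Real.sqrt_eq_rpow, ofReal_cpow (by norm_num)]
    norm_num
  have hcpow : x₂ ^ ((5 : ℂ) / 2) = x₂ ^ 2 * x₂ ^ ((1 : ℂ) / 2) := by
    rw [show (5 : ℂ) / 2 = 2 + 1 / 2 by norm_num, cpow_add _ _ hx₂, cpow_two]
  calc _ = 9 * x₂ ^ 2 * (3 * x₂) ^ ((1 : ℂ) / 2) *
        ∫ t in (0:ℝ)..1, (t : ℂ) * (1 - (t : ℂ)) ^ ((1 : ℂ) / 2) := by
        rw [← intervalIntegral.integral_const_mul]
        congr 1 with t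
        ring
    _ = _ := by
      rw [integral_mul_one_sub_cpow_half, ← ofReal_ofNat 3, ofReal_mul_cpow (by norm_num),
        ofReal_ofNat, hsqrt3, hcpow]
      push_cast
      ring

/-- The period `∫_{x₂}^{−2x₂} (x−x₂)√(x+2x₂) dx` of `v = √Q`, `Q = (x+2x₂)(x−x₂)²(dx)²`,
computed along the straight segment `x(t) = x₂(1−3t)`, `t ∈ [0,1]`, with the continuous
branch `√(x+2x₂) = (3x₂)^{1/2}(1−t)^{1/2}`. It equals `±(12√3/5) x₂^{5/2}`, and is real
iff `x₂` lies on one of the five rays `e^{2πik/5}·ℝ₊`. -/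
theorem period_of_double_zero_differential (x₂ : ℂ) (hx₂ : x₂ ≠ 0) :
    (∃ s : ℂ, (s = 1 ∨ s = -1) ∧
      (∫ t in (0:ℝ)..1,
          ((x₂ * (1 - 3 * (t : ℂ)) - x₂) *
            ((3 * x₂) ^ ((1 : ℂ) / 2) * ((1 : ℂ) - (t : ℂ)) ^ ((1 : ℂ) / 2))) *
            (-3 * x₂)) =
        s * ((12 * Real.sqrt 3 / 5 : ℝ) : ℂ) * x₂ ^ ((5 : ℂ) / 2)) ∧
    ((∫ t in (0:ℝ)..1,
          ((x₂ * (1 - 3 * (t : ℂ)) - x₂) *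
            ((3 * x₂) ^ ((1 : ℂ) / 2) * ((1 : ℂ) - (t : ℂ)) ^ ((1 : ℂ) / 2))) *
            (-3 * x₂)).im = 0 ↔
      ∃ k : Fin 5, ∃ r : ℝ, 0 < r ∧
        x₂ = (r : ℂ) * Complex.exp (2 * (Real.pi : ℂ) * Complex.I * (k : ℕ) / 5)) := by
  rw [period_integral_eq x₂ hx₂]
  refine ⟨⟨1, .inl rfl, by ring⟩, ?_⟩
  have hsq : (x₂ ^ ((5 : ℂ) / 2)) ^ 2 = x₂ ^ 5 := by
    rw [← cpow_nat_mul]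
    norm_num
  rw [im_ofReal_mul, mul_eq_zero, or_iff_right (by positivity),
    im_eq_zero_iff_sq_pos (cpow_ne_zero_iff.mpr (.inl hx₂)), hsq]
  exact pow_pos_iff_mem_rays (by norm_num)
end

section
/- Define J(q) = ∫₀¹ (1+(1−2x)q)/√(x(1−x)(1−qx)) dx for q ∈ ℂ∖[1,∞). Then J(0) = π, lim_{q→1⁻} J(q) = 4, and J maps (−∞,1] onto (−∞,4]; moreover J takes real values on the real segment (−∞,1]. -/
open Complex Filter Topology

/-- `J(q) = ∫₀¹ (1+(1−2x)q)/√(x(1−x)(1−qx)) dx` (principal branch of the square root). -/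
noncomputable def J (q : ℂ) : ℂ :=
  ∫ x in (0:ℝ)..1,
    (1 + (1 - 2 * (x : ℂ)) * q) /
      (((x : ℂ) * (1 - (x : ℂ)) * (1 - q * (x : ℂ))) ^ ((1 : ℂ) / 2))

/-!
For real `q ≤ 1` the integrand of `J` is real, so `J q` is the real integral
`∫₀¹ φ_q(x) / √(x(1-x)) dx` with `φ_q(x) = (1 + (1-2x)q) / √(1-qx)`. Since `φ_q` is bounded
locally uniformly in `q ≤ 1`, dominated convergence makes this continuous on `(-∞, 1]` and
differentiable on `(-∞, 1)`. The `q`-derivative of the integrand is a nonnegative term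
`(1-x) / (2√(1-qx)√(x(1-x)))` plus the `x`-derivative of `√(x(1-x)/(1-qx))`, which vanishes at
`0` and `1`. So `J` is nondecreasing, and for `q ≤ 0` its derivative is at least `c / √(1-q)` with
`c > 0`, whence `J q ≤ π + 2c(1 - √(1-q)) → -∞`. Finally `J 0 = π` (`arcsin (2x-1)` is a primitive of
`1/√(x(1-x))`) and `J 1 = ∫₀¹ 2/√x = 4`, and the intermediate value theorem gives the image.
-/

open Real Set MeasureTheory intervalIntegral

lemma hasDerivAt_arcsin_two_mul_sub_one {x : ℝ} (hx : x ∈ Ioo (0 : ℝ) 1) :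
    HasDerivAt (fun y => arcsin (2 * y - 1)) (√(x * (1 - x)))⁻¹ x := by
  have hlin : HasDerivAt (fun y : ℝ => 2 * y - 1) 2 x := by
    simpa using ((hasDerivAt_id x).const_mul 2).sub_const 1
  refine ((Real.hasDerivAt_arcsin (by linarith [hx.1]) (by linarith [hx.2])).comp x
    hlin).congr_deriv ?_
  have hsq : √(1 - (2 * x - 1) ^ 2) = 2 * √(x * (1 - x)) := by
    rw [show 1 - (2 * x - 1) ^ 2 = 2 ^ 2 * (x * (1 - x)) by ring, sqrt_mul (by norm_num),
      sqrt_sq zero_le_two]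
  have hpos : 0 < √(x * (1 - x)) := sqrt_pos.2 (mul_pos hx.1 (by linarith [hx.2]))
  rw [hsq]
  field_simp

lemma intervalIntegrable_inv_sqrt_mul_one_sub :
    IntervalIntegrable (fun x => (√(x * (1 - x)))⁻¹) volume 0 1 := by
  refine intervalIntegrable_deriv_of_nonneg (g := fun y => arcsin (2 * y - 1))
    (by fun_prop) (fun x hx => hasDerivAt_arcsin_two_mul_sub_one ?_) (fun x _ => by positivity)
  simpa using hx

lemma integral_inv_sqrt_mul_one_sub : ∫ x in (0 : ℝ)..1, (√(x * (1 - x)))⁻¹ = π := by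
  rw [integral_eq_sub_of_hasDerivAt_of_le zero_le_one (by fun_prop)
    (fun x hx => hasDerivAt_arcsin_two_mul_sub_one hx) intervalIntegrable_inv_sqrt_mul_one_sub]
  norm_num

lemma ContinuousOn.intervalIntegrable_div_sqrt_mul_one_sub {h : ℝ → ℝ}
    (hh : ContinuousOn h (Icc 0 1)) :
    IntervalIntegrable (fun x => h x / √(x * (1 - x))) volume 0 1 := by
  simpa only [div_eq_mul_inv] using
    intervalIntegrable_inv_sqrt_mul_one_sub.continuousOn_mul (by rwa [uIcc_of_le zero_le_one])

noncomputable def jIntegrand (q x : ℝ) : ℝ := (1 + (1 - 2 * x) * q) / √(1 - q * x)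

/-- The second summand, divided by `√(x(1-x))`, is the `x`-derivative of `√(x(1-x)) / √(1-qx)`. -/
noncomputable def jIntegrandDeriv (q x : ℝ) : ℝ :=
  (1 - x) / (2 * √(1 - q * x)) + (1 - 2 * x + q * x ^ 2) / (2 * (1 - q * x) * √(1 - q * x))

noncomputable def jReal (q : ℝ) : ℝ := ∫ x in (0 : ℝ)..1, jIntegrand q x / √(x * (1 - x))

lemma one_sub_mul_pos_of_lt_one {q x : ℝ} (hq : q < 1) (hx : x ∈ Icc (0 : ℝ) 1) :
    0 < 1 - q * x := by
  rcases le_total q 0 with h | h <;> nlinarith [hx.1, hx.2]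

lemma one_sub_mul_pos_of_le_one {q x : ℝ} (hq : q ≤ 1) (hx : x ∈ Ico (0 : ℝ) 1) :
    0 < 1 - q * x := by
  rcases le_total q 0 with h | h <;> nlinarith [hx.1, hx.2]

@[fun_prop]
lemma measurable_jIntegrand (q : ℝ) : Measurable (jIntegrand q) := by
  unfold jIntegrand; fun_prop

@[fun_prop]
lemma measurable_jIntegrandDeriv (q : ℝ) : Measurable (jIntegrandDeriv q) := by
  unfold jIntegrandDeriv; fun_prop

lemma jIntegrand_zero (x : ℝ) : jIntegrand 0 x = 1 := by
  simp [jIntegrand]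

lemma jIntegrand_one (x : ℝ) : jIntegrand 1 x = 2 * √(1 - x) := by
  rw [jIntegrand, show 1 + (1 - 2 * x) * 1 = 2 * (1 - x) by ring, one_mul, mul_div_assoc,
    div_sqrt]

lemma continuousOn_jIntegrand {q : ℝ} (hq : q ≤ 1) : ContinuousOn (jIntegrand q) (Icc 0 1) := by
  rcases hq.lt_or_eq with hq | rfl
  · refine ContinuousOn.div (by fun_prop) (by fun_prop) fun x hx => ?_
    exact (sqrt_pos.2 (one_sub_mul_pos_of_lt_one hq hx)).ne'
  · simp_rw [funext jIntegrand_one]; fun_prop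

lemma hasDerivAt_jIntegrand {q x : ℝ} (h : 0 < 1 - q * x) :
    HasDerivAt (fun q => jIntegrand q x) (jIntegrandDeriv q x) q := by
  have hnum : HasDerivAt (fun q : ℝ => 1 + (1 - 2 * x) * q) (1 - 2 * x) q := by
    simpa using ((hasDerivAt_id q).const_mul (1 - 2 * x)).const_add 1
  have hden : HasDerivAt (fun q : ℝ => √(1 - q * x)) (-x / (2 * √(1 - q * x))) q := by
    refine HasDerivAt.sqrt ?_ h.ne'
    simpa using ((hasDerivAt_id q).mul_const x).const_sub 1
  refine (hnum.div hden (sqrt_pos.2 h).ne').congr_deriv ?_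
  have hs2 : √(1 - q * x) ^ 2 = 1 - q * x := sq_sqrt h.le
  rw [jIntegrandDeriv]
  set s := √(1 - q * x)
  have hs : 0 < s := sqrt_pos.2 h
  rw [← hs2]
  field_simp
  linear_combination (1 - 3 * x) * hs2

lemma abs_jIntegrand_le {q x : ℝ} (hq : q ≤ 1) (hx : x ∈ Icc (0 : ℝ) 1) :
    |jIntegrand q x| ≤ 3 + |q| := by
  obtain ⟨hx0, hx1⟩ := hx
  have hqx : 0 ≤ 1 - q * x := by nlinarith
  set s := √(1 - q * x)
  have hs0 : 0 ≤ s := sqrt_nonneg _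
  have hs2 : s ^ 2 = 1 - q * x := sq_sqrt hqx
  rw [jIntegrand, abs_div, abs_of_nonneg hs0]
  refine div_le_of_le_mul₀ hs0 (by positivity) ?_
  rcases le_total q 0 with hq0 | hq0
  · have hs1 : 1 ≤ s := by nlinarith
    rw [abs_of_nonpos hq0, abs_le]
    constructor <;> nlinarith
  · have hs1 : s ≤ 1 := by nlinarith
    rw [abs_of_nonneg hq0, abs_of_nonneg (by nlinarith)]
    nlinarith

lemma intervalIntegrable_jIntegrand_div {q : ℝ} (hq : q ≤ 1) :
    IntervalIntegrable (fun x => jIntegrand q x / √(x * (1 - x))) volume 0 1 :=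
  (continuousOn_jIntegrand hq).intervalIntegrable_div_sqrt_mul_one_sub

lemma jReal_zero : jReal 0 = π := by
  simp only [jReal, jIntegrand_zero, one_div, integral_inv_sqrt_mul_one_sub]

lemma jReal_one : jReal 1 = 4 := by
  have hderiv : ∀ x ∈ Ioo (0 : ℝ) 1,
      HasDerivAt (fun y => 4 * √y) (jIntegrand 1 x / √(x * (1 - x))) x := by
    intro x ⟨hx0, hx1⟩
    refine ((hasDerivAt_sqrt hx0.ne').const_mul 4).congr_deriv ?_
    have h1x : 0 < √(1 - x) := sqrt_pos.2 (by linarith)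
    rw [jIntegrand_one, sqrt_mul hx0.le]
    field_simp
    ring
  rw [jReal, integral_eq_sub_of_hasDerivAt_of_le zero_le_one (by fun_prop) hderiv
    (intervalIntegrable_jIntegrand_div le_rfl)]
  norm_num

lemma continuousOn_jReal : ContinuousOn jReal (Iic 1) := by
  intro q₀ hq₀
  have hnear : ∀ᶠ q in 𝓝[Iic 1] q₀, q ≤ 1 ∧ |q| ≤ |q₀| + 1 := by
    filter_upwards [self_mem_nhdsWithin,
      nhdsWithin_le_nhds (Icc_mem_nhds (sub_lt_self q₀ one_pos) (lt_add_one q₀))] with q hq hball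
    exact ⟨hq, abs_le.2 ⟨by linarith [neg_abs_le q₀, hball.1],
      by linarith [le_abs_self q₀, hball.2]⟩⟩
  refine continuousWithinAt_of_dominated_interval
    (bound := fun x => (3 + (|q₀| + 1)) / √(x * (1 - x)))
    (Eventually.of_forall fun q => (by fun_prop : Measurable _).aestronglyMeasurable) ?_
    continuousOn_const.intervalIntegrable_div_sqrt_mul_one_sub ?_
  · filter_upwards [hnear] with q ⟨hq, hq_abs⟩
    refine Eventually.of_forall fun x hx => ?_
    rw [uIoc_of_le zero_le_one] at hx
    rw [norm_div, norm_of_nonneg (sqrt_nonneg _), norm_eq_abs]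
    gcongr
    exact (abs_jIntegrand_le hq (Ioc_subset_Icc_self hx)).trans (by gcongr)
  · filter_upwards [Measure.ae_ne volume 1] with x hx1 hx
    rw [uIoc_of_le zero_le_one] at hx
    have hpos : 0 < 1 - q₀ * x := one_sub_mul_pos_of_le_one hq₀ ⟨hx.1.le, lt_of_le_of_ne hx.2 hx1⟩
    exact ((hasDerivAt_jIntegrand hpos).continuousAt.div_const _).continuousWithinAt

lemma continuousOn_jIntegrandDeriv {b : ℝ} (hb : b < 1) (a : ℝ) :
    ContinuousOn (fun p : ℝ × ℝ => jIntegrandDeriv p.1 p.2) (Icc a b ×ˢ Icc 0 1) := by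
  have hpos : ∀ p ∈ Icc a b ×ˢ Icc (0 : ℝ) 1, 0 < 1 - p.1 * p.2 := fun p hp =>
    one_sub_mul_pos_of_lt_one (hp.1.2.trans_lt hb) hp.2
  have hsqrt : ∀ p ∈ Icc a b ×ˢ Icc (0 : ℝ) 1, √(1 - p.1 * p.2) ≠ 0 := fun p hp =>
    (sqrt_pos.2 (hpos p hp)).ne'
  unfold jIntegrandDeriv
  refine ContinuousOn.add ?_ ?_
  · exact ContinuousOn.div (by fun_prop) (by fun_prop) fun p hp =>
      mul_ne_zero two_ne_zero (hsqrt p hp)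
  · exact ContinuousOn.div (by fun_prop) (by fun_prop) fun p hp =>
      mul_ne_zero (mul_ne_zero two_ne_zero (hpos p hp).ne') (hsqrt p hp)

lemma hasDerivAt_jReal_integral_jIntegrandDeriv {q : ℝ} (hq : q < 1) :
    HasDerivAt jReal (∫ x in (0 : ℝ)..1, jIntegrandDeriv q x / √(x * (1 - x))) q := by
  obtain ⟨C, hC⟩ := (isCompact_Icc.prod isCompact_Icc).exists_bound_of_continuousOn
    (continuousOn_jIntegrandDeriv (b := (q + 1) / 2) (by linarith) (q - 1))
  have hnhds : Icc (q - 1) ((q + 1) / 2) ∈ 𝓝 q := Icc_mem_nhds (by linarith) (by linarith)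
  refine (hasDerivAt_integral_of_dominated_loc_of_deriv_le
    (F' := fun u x => jIntegrandDeriv u x / √(x * (1 - x))) (bound := fun x => C / √(x * (1 - x)))
    hnhds (Eventually.of_forall fun u =>
      (by fun_prop : Measurable fun x => jIntegrand u x / √(x * (1 - x))).aestronglyMeasurable)
    (intervalIntegrable_jIntegrand_div hq.le)
    (by fun_prop : Measurable fun x => jIntegrandDeriv q x / √(x * (1 - x))).aestronglyMeasurable
    ?_ continuousOn_const.intervalIntegrable_div_sqrt_mul_one_sub ?_).2
  · refine Eventually.of_forall fun x hx u hu => ?_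
    rw [uIoc_of_le zero_le_one] at hx
    rw [norm_div, norm_of_nonneg (sqrt_nonneg _)]
    gcongr
    exact hC (u, x) ⟨hu, Ioc_subset_Icc_self hx⟩
  · refine Eventually.of_forall fun x hx u hu => ?_
    rw [uIoc_of_le zero_le_one] at hx
    exact (hasDerivAt_jIntegrand
      (one_sub_mul_pos_of_lt_one (by linarith [hu.2]) (Ioc_subset_Icc_self hx))).div_const _

lemma hasDerivAt_sqrt_mul_one_sub_div {q x : ℝ} (hx : x ∈ Ioo (0 : ℝ) 1) (h : 0 < 1 - q * x) :
    HasDerivAt (fun y => √(y * (1 - y)) / √(1 - q * y))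
      ((1 - 2 * x + q * x ^ 2) / (2 * (1 - q * x) * √(1 - q * x)) / √(x * (1 - x))) x := by
  have hxx : 0 < x * (1 - x) := mul_pos hx.1 (by linarith [hx.2])
  have hnum : HasDerivAt (fun y => √(y * (1 - y))) ((1 - 2 * x) / (2 * √(x * (1 - x)))) x := by
    refine HasDerivAt.sqrt ?_ hxx.ne'
    refine ((hasDerivAt_id x).mul ((hasDerivAt_id x).const_sub 1)).congr_deriv ?_
    simp only [id]; ring
  have hden : HasDerivAt (fun y => √(1 - q * y)) (-q / (2 * √(1 - q * x))) x := by
    refine HasDerivAt.sqrt ?_ h.ne'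
    simpa using ((hasDerivAt_id x).const_mul q).const_sub 1
  refine (hnum.div hden (sqrt_pos.2 h).ne').congr_deriv ?_
  have hr2 : √(x * (1 - x)) ^ 2 = x * (1 - x) := sq_sqrt hxx.le
  have hs2 : √(1 - q * x) ^ 2 = 1 - q * x := sq_sqrt h.le
  set r := √(x * (1 - x))
  set s := √(1 - q * x)
  have hr : 0 < r := sqrt_pos.2 hxx
  have hs : 0 < s := sqrt_pos.2 h
  rw [← hs2]
  field_simp
  linear_combination (1 - 2 * x) * hs2 + q * hr2

noncomputable def jRealDeriv (q : ℝ) : ℝ :=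
  ∫ x in (0 : ℝ)..1, (1 - x) / (2 * √(1 - q * x)) / √(x * (1 - x))

lemma intervalIntegrable_one_sub_div_two_mul_sqrt_div {q : ℝ} (hq : q < 1) :
    IntervalIntegrable (fun x => (1 - x) / (2 * √(1 - q * x)) / √(x * (1 - x))) volume 0 1 :=
  ContinuousOn.intervalIntegrable_div_sqrt_mul_one_sub <|
    ContinuousOn.div (by fun_prop) (by fun_prop) fun x hx =>
      mul_ne_zero two_ne_zero (sqrt_pos.2 (one_sub_mul_pos_of_lt_one hq hx)).ne'

lemma integral_jIntegrandDeriv {q : ℝ} (hq : q < 1) :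
    ∫ x in (0 : ℝ)..1, jIntegrandDeriv q x / √(x * (1 - x)) = jRealDeriv q := by
  have hpos : ∀ x ∈ Icc (0 : ℝ) 1, 0 < 1 - q * x := fun x hx => one_sub_mul_pos_of_lt_one hq hx
  have hcont : ContinuousOn (fun x => (1 - 2 * x + q * x ^ 2) / (2 * (1 - q * x) * √(1 - q * x)))
      (Icc 0 1) :=
    ContinuousOn.div (by fun_prop) (by fun_prop) fun x hx =>
      mul_ne_zero (mul_ne_zero two_ne_zero (hpos x hx).ne') (sqrt_pos.2 (hpos x hx)).ne'
  have hboundary : ∫ x in (0 : ℝ)..1,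
      (1 - 2 * x + q * x ^ 2) / (2 * (1 - q * x) * √(1 - q * x)) / √(x * (1 - x)) = 0 := by
    rw [integral_eq_sub_of_hasDerivAt_of_le zero_le_one
      (ContinuousOn.div (by fun_prop) (by fun_prop) fun x hx => (sqrt_pos.2 (hpos x hx)).ne')
      (fun x hx => hasDerivAt_sqrt_mul_one_sub_div hx (hpos x (Ioo_subset_Icc_self hx)))
      hcont.intervalIntegrable_div_sqrt_mul_one_sub]
    simp
  simp_rw [jIntegrandDeriv, add_div (_ / (2 * √ _))]
  rw [integral_add (intervalIntegrable_one_sub_div_two_mul_sqrt_div hq)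
    hcont.intervalIntegrable_div_sqrt_mul_one_sub, hboundary, add_zero, jRealDeriv]

lemma hasDerivAt_jReal {q : ℝ} (hq : q < 1) : HasDerivAt jReal (jRealDeriv q) q :=
  integral_jIntegrandDeriv hq ▸ hasDerivAt_jReal_integral_jIntegrandDeriv hq

lemma jRealDeriv_pos {q : ℝ} (hq : q < 1) : 0 < jRealDeriv q := by
  refine intervalIntegral_pos_of_pos_on (intervalIntegrable_one_sub_div_two_mul_sqrt_div hq)
    (fun x ⟨hx0, hx1⟩ => ?_) zero_lt_one
  have hx : 0 < 1 - x := sub_pos.2 hx1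
  have hqx : 0 < 1 - q * x := one_sub_mul_pos_of_lt_one hq ⟨hx0.le, hx1.le⟩
  positivity

lemma jRealDeriv_zero_div_le {t : ℝ} (ht : t ≤ 0) : jRealDeriv 0 / √(1 - t) ≤ jRealDeriv t := by
  have ht1 : t < 1 := ht.trans_lt zero_lt_one
  rw [jRealDeriv, jRealDeriv, ← intervalIntegral.integral_div]
  refine integral_mono_on zero_le_one
    ((intervalIntegrable_one_sub_div_two_mul_sqrt_div zero_lt_one).div_const _)
    (intervalIntegrable_one_sub_div_two_mul_sqrt_div ht1) fun x ⟨hx0, hx1⟩ => ?_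
  have hpos : 0 < √(1 - t * x) := sqrt_pos.2 (one_sub_mul_pos_of_lt_one ht1 ⟨hx0, hx1⟩)
  have : 0 ≤ 1 - x := sub_nonneg.2 hx1
  calc (1 - x) / (2 * √(1 - 0 * x)) / √(x * (1 - x)) / √(1 - t)
      = (1 - x) / (2 * √(1 - t)) / √(x * (1 - x)) := by
        simp only [zero_mul, sub_zero, Real.sqrt_one]; ring
    _ ≤ (1 - x) / (2 * √(1 - t * x)) / √(x * (1 - x)) := by gcongr; nlinarith

lemma monotoneOn_jReal : MonotoneOn jReal (Iic 1) := by
  refine monotoneOn_of_hasDerivWithinAt_nonneg (f' := jRealDeriv) (convex_Iic 1)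
    continuousOn_jReal ?_ ?_ <;> rw [interior_Iic]
  · exact fun q hq => (hasDerivAt_jReal hq).hasDerivWithinAt
  · exact fun q hq => (jRealDeriv_pos hq).le

lemma jReal_le_of_nonpos {q : ℝ} (hq : q ≤ 0) :
    jReal q ≤ π + 2 * jRealDeriv 0 * (1 - √(1 - q)) := by
  set c := jRealDeriv 0
  have hmono : MonotoneOn (fun t => jReal t + 2 * c * √(1 - t)) (Iic 0) := by
    refine monotoneOn_of_hasDerivWithinAt_nonneg (convex_Iic 0)
      (f' := fun t => jRealDeriv t + 2 * c * (-1 / (2 * √(1 - t))))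
      ((continuousOn_jReal.mono (Iic_subset_Iic.2 zero_le_one)).add (by fun_prop)) ?_ ?_ <;>
      rw [interior_Iic]
    · intro t ht
      have hsqrt := ((hasDerivAt_id' t).const_sub 1).sqrt (by linarith [mem_Iio.1 ht])
      exact ((hasDerivAt_jReal (ht.trans zero_lt_one)).add
        (hsqrt.const_mul (2 * c))).hasDerivWithinAt
    · intro t ht
      have := jRealDeriv_zero_div_le (le_of_lt ht)
      rw [show 2 * c * (-1 / (2 * √(1 - t))) = -(c / √(1 - t)) by ring]
      linarith
  have := hmono hq self_mem_Iic hq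
  simp only [jReal_zero, sub_zero, Real.sqrt_one, mul_one] at this
  linarith

lemma exists_jReal_le (y : ℝ) : ∃ q ≤ 0, jReal q ≤ y := by
  have hc := jRealDeriv_pos zero_lt_one
  obtain ⟨t, ht⟩ : ∃ t, 2 * jRealDeriv 0 * (t - 1) = π - y :=
    ⟨(π - y) / (2 * jRealDeriv 0) + 1, by field_simp; ring⟩
  have ht_le : t ≤ √(1 - -t ^ 2) := (le_abs_self t).trans (abs_le_sqrt (by linarith))
  have hq : -t ^ 2 ≤ 0 := neg_nonpos.2 (sq_nonneg t)
  refine ⟨-t ^ 2, hq, (jReal_le_of_nonpos hq).trans ?_⟩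
  nlinarith

lemma jReal_image_Iic : jReal '' Iic 1 = Iic 4 := by
  refine Subset.antisymm ?_ fun y hy => ?_
  · rintro _ ⟨q, hq, rfl⟩
    exact jReal_one ▸ monotoneOn_jReal hq self_mem_Iic hq
  · obtain ⟨q, hq0, hqy⟩ := exists_jReal_le y
    have hq1 : q ≤ 1 := hq0.trans zero_le_one
    obtain ⟨p, hp, rfl⟩ := intermediate_value_Icc hq1
      (continuousOn_jReal.mono Icc_subset_Iic_self) ⟨hqy, hy.trans_eq jReal_one.symm⟩
    exact ⟨p, hp.2, rfl⟩

lemma tendsto_jReal_one : Tendsto jReal (𝓝[<] 1) (𝓝 4) :=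
  jReal_one ▸ (continuousOn_jReal 1 self_mem_Iic).tendsto.mono_left
    (nhdsWithin_mono _ Iio_subset_Iic_self)

lemma J_ofReal {q : ℝ} (hq : q ≤ 1) : J q = jReal q := by
  rw [J, jReal, ← intervalIntegral.integral_ofReal]
  refine integral_congr fun x hx => ?_
  rw [uIcc_of_le zero_le_one] at hx
  have hxx : 0 ≤ x * (1 - x) := mul_nonneg hx.1 (by linarith [hx.2])
  have hqx : 0 ≤ 1 - q * x := by rcases le_total q 0 with h | h <;> nlinarith [hx.1, hx.2]
  have hsqrt : ((x : ℂ) * (1 - x) * (1 - q * x)) ^ ((1 : ℂ) / 2) =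
      ((√(x * (1 - x)) * √(1 - q * x) : ℝ) : ℂ) := by
    rw [← sqrt_mul hxx, sqrt_eq_rpow, ofReal_cpow (mul_nonneg hxx hqx)]
    push_cast
    rfl
  rw [hsqrt, jIntegrand]
  push_cast
  ring

/-- `J(0) = π`, `J(q) → 4` as `q → 1⁻`, `J` is real-valued on `(−∞,1]`, and `J` maps
`(−∞,1]` onto `(−∞,4]`. -/
theorem J_values_on_real_segment :
    J 0 = (Real.pi : ℂ) ∧
    Tendsto (fun q : ℝ => J (q : ℂ)) (nhdsWithin 1 (Set.Iio 1)) (nhds 4) ∧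
    (∀ q : ℝ, q ≤ 1 → (J (q : ℂ)).im = 0) ∧
    (fun q : ℝ => (J (q : ℂ)).re) '' Set.Iic 1 = Set.Iic 4 := by
  refine ⟨?_, ?_, fun q hq => by rw [J_ofReal hq, ofReal_im], ?_⟩
  · simpa [jReal_zero] using J_ofReal zero_le_one
  · have hJ : ∀ᶠ q in 𝓝[<] (1 : ℝ), (jReal q : ℂ) = J q :=
      eventually_nhdsWithin_of_forall fun q hq => (J_ofReal (le_of_lt hq)).symm
    simpa using ((continuous_ofReal.tendsto _).comp tendsto_jReal_one).congr' hJ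
  · rw [image_congr fun q hq => by rw [J_ofReal hq, ofReal_re], jReal_image_Iic]
end

section
/- For q > 1, the imaginary part Im J(q) of the boundary value (from the upper half-plane) of J(q) = ∫₀¹ (1+(1−2x)q)/√(x(1−x)(1−qx)) dx is strictly positive. -/
open Complex Filter Topology

namespace JAux
open MeasureTheory intervalIntegral Set
noncomputable section

def N (q x : ℝ) : ℝ := 1 + (1 - 2*x) * q
def w (q x : ℝ) : ℝ := x * (1 - x) * (1 - q*x)
def P (q ε x : ℝ) : ℂ := (x:ℂ) * (1 - (x:ℂ)) * (1 - ((q:ℂ) + (ε:ℂ)*Complex.I)*(x:ℂ))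
def F (q ε x : ℝ) : ℂ :=
  (1 + (1 - 2*(x:ℂ))*((q:ℂ) + (ε:ℂ)*Complex.I)) / (P q ε x) ^ ((1:ℂ)/2)
def f₀ (q x : ℝ) : ℂ :=
  if x ≤ q⁻¹ then ((N q x / Real.sqrt (w q x) : ℝ) : ℂ)
  else Complex.I * ((N q x / Real.sqrt (-(w q x)) : ℝ) : ℂ)
def h (q x : ℝ) : ℝ := N q x / Real.sqrt (-(w q x))
def G (q x : ℝ) : ℝ :=
  (min (q⁻¹/2) ((1-q⁻¹)/2))⁻¹ *
    ((Real.sqrt |x|)⁻¹ + (Real.sqrt |x - q⁻¹|)⁻¹ + (Real.sqrt |x - 1|)⁻¹)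

/-! ### basic facts -/

lemma a_pos {q : ℝ} (hq : 1 < q) : 0 < q⁻¹ := inv_pos.2 (lt_trans one_pos hq)
lemma a_lt_one {q : ℝ} (hq : 1 < q) : q⁻¹ < 1 := inv_lt_one_of_one_lt₀ hq

lemma delta_pos {q : ℝ} (hq : 1 < q) : 0 < min (q⁻¹/2) ((1-q⁻¹)/2) := by
  have := a_pos hq; have := a_lt_one hq
  apply lt_min <;> linarith

lemma delta_le_half {q : ℝ} (hq : 1 < q) : min (q⁻¹/2) ((1-q⁻¹)/2) ≤ 1/2 := by
  have := a_lt_one hq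
  exact le_trans (min_le_left _ _) (by linarith)

lemma G_nonneg {q : ℝ} (hq : 1 < q) (x : ℝ) : 0 ≤ G q x := by
  have := delta_pos hq
  rw [G]
  positivity

/-! ### integrability of inverse square root singularities -/

lemma measInvSqrt (c : ℝ) {s : Set ℝ} :
    AEStronglyMeasurable (fun x => (Real.sqrt |x - c|)⁻¹) (volume.restrict s) :=
  (((continuous_id.sub continuous_const).abs.sqrt).measurable.inv).aestronglyMeasurable

lemma intInvSqrt (c a b : ℝ) :
    IntervalIntegrable (fun x => (Real.sqrt |x - c|)⁻¹) volume a b := by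
  have base : ∀ u v : ℝ, IntervalIntegrable (fun x : ℝ => x ^ (-(1/2) : ℝ)) volume u v :=
    fun u v => intervalIntegral.intervalIntegrable_rpow' (by norm_num)
  have left : ∀ a : ℝ, a ≤ c → IntervalIntegrable (fun x => (Real.sqrt |x - c|)⁻¹) volume a c := by
    intro a hac
    have h1 : IntervalIntegrable (fun x : ℝ => (c - x) ^ (-(1/2) : ℝ)) volume (c - 0) (c - (c - a)) :=
      (base 0 (c - a)).comp_sub_left c
    have h1' : IntervalIntegrable (fun x : ℝ => (c - x) ^ (-(1/2) : ℝ)) volume a c := by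
      have e : c - (c - a) = a := by ring
      rw [e, sub_zero] at h1
      exact h1.symm
    refine h1'.mono_fun (measInvSqrt c) ?_
    filter_upwards [ae_restrict_mem measurableSet_uIoc] with x hx
    rw [uIoc_of_le hac] at hx
    have hxc : x ≤ c := hx.2
    have e1 : |x - c| = c - x := by rw [abs_sub_comm]; exact abs_of_nonneg (by linarith)
    have e2 : (Real.sqrt (c - x))⁻¹ = (c - x) ^ (-(1/2) : ℝ) := by
      rw [Real.rpow_neg (by linarith), Real.sqrt_eq_rpow]
    rw [Real.norm_eq_abs, Real.norm_eq_abs, e1, e2]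
  have right : ∀ b : ℝ, c ≤ b → IntervalIntegrable (fun x => (Real.sqrt |x - c|)⁻¹) volume c b := by
    intro b hcb
    have h1 : IntervalIntegrable (fun x : ℝ => (x - c) ^ (-(1/2) : ℝ)) volume (0 + c) ((b - c) + c) :=
      (base 0 (b - c)).comp_sub_right c
    have h1' : IntervalIntegrable (fun x : ℝ => (x - c) ^ (-(1/2) : ℝ)) volume c b := by
      have e : (b - c) + c = b := by ring
      rwa [e, zero_add] at h1
    refine h1'.mono_fun (measInvSqrt c) ?_
    filter_upwards [ae_restrict_mem measurableSet_uIoc] with x hx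
    rw [uIoc_of_le hcb] at hx
    have hxc : c < x := hx.1
    have e1 : |x - c| = x - c := abs_of_pos (by linarith)
    have e2 : (Real.sqrt (x - c))⁻¹ = (x - c) ^ (-(1/2) : ℝ) := by
      rw [Real.rpow_neg (by linarith), Real.sqrt_eq_rpow]
    rw [Real.norm_eq_abs, Real.norm_eq_abs, e1, e2]
  have seg : ∀ u : ℝ, IntervalIntegrable (fun x => (Real.sqrt |x - c|)⁻¹) volume c u := by
    intro u
    rcases le_total c u with hu | hu
    · exact right u hu
    · exact (left u hu).symm
  exact ((seg a).symm.trans (seg b))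

lemma G_integrable {q : ℝ} (hq : 1 < q) (u v : ℝ) :
    IntervalIntegrable (G q) volume u v := by
  have h1 := ((intInvSqrt 0 u v).add (intInvSqrt q⁻¹ u v)).add (intInvSqrt 1 u v)
  have h2 := h1.const_mul ((min (q⁻¹/2) ((1-q⁻¹)/2))⁻¹)
  have e : (fun x : ℝ => (min (q⁻¹/2) ((1-q⁻¹)/2))⁻¹ *
      ((Real.sqrt |x - 0|)⁻¹ + (Real.sqrt |x - q⁻¹|)⁻¹ + (Real.sqrt |x - 1|)⁻¹)) = G q := by
    funext x
    rw [G, sub_zero]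
  rwa [e] at h2

/-! ### the domination bound -/

lemma sqrt_abs_w (q : ℝ) (hq : 1 < q) {x : ℝ} (hx : x ∈ Ioc (0:ℝ) 1) :
    Real.sqrt |w q x| =
      Real.sqrt x * (Real.sqrt (1-x) * (Real.sqrt q * Real.sqrt |x - q⁻¹|)) := by
  have hq0 : (0:ℝ) < q := lt_trans one_pos hq
  have e1 : |w q x| = x * ((1-x) * (q * |x - q⁻¹|)) := by
    have e : 1 - q*x = q * (q⁻¹ - x) := by field_simp
    rw [w, e, abs_mul, abs_mul, abs_mul,
      _root_.abs_of_pos hx.1, _root_.abs_of_nonneg (by linarith [hx.2] : (0:ℝ) ≤ 1 - x),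
      _root_.abs_of_pos hq0, abs_sub_comm]
    ring
  rw [e1, Real.sqrt_mul hx.1.le, Real.sqrt_mul (by linarith [hx.2] : (0:ℝ) ≤ 1-x),
    Real.sqrt_mul hq0.le]

lemma inv_mul_bound {u r δ : ℝ} (hu : 0 ≤ u) (hδ : 0 < δ) (hr : δ ≤ r) :
    (u * r)⁻¹ ≤ δ⁻¹ * u⁻¹ := by
  rw [mul_inv, mul_comm]
  gcongr

lemma w_dom (q : ℝ) (hq : 1 < q) {x : ℝ} (hx : x ∈ Ioc (0:ℝ) 1) :
    (Real.sqrt |w q x|)⁻¹ ≤ G q x := by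
  set a := q⁻¹ with ha
  set δ := min (a/2) ((1-a)/2) with hδdef
  have hδ : 0 < δ := delta_pos hq
  have hδh : δ ≤ 1/2 := delta_le_half hq
  have ha0 : 0 < a := a_pos hq
  have ha1 : a < 1 := a_lt_one hq
  have hδa : δ ≤ a/2 := min_le_left _ _
  have hδb : δ ≤ (1-a)/2 := min_le_right _ _
  have hq1 : (1:ℝ) ≤ Real.sqrt q := by
    rw [show (1:ℝ) = Real.sqrt 1 by simp]
    exact Real.sqrt_le_sqrt hq.le
  have sδ : Real.sqrt δ * Real.sqrt δ = δ := Real.mul_self_sqrt hδ.le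
  have hGsplit : ∀ T : ℝ, (T = (Real.sqrt |x|)⁻¹ ∨ T = (Real.sqrt |x - a|)⁻¹ ∨
      T = (Real.sqrt |x - 1|)⁻¹) → δ⁻¹ * T ≤ G q x := by
    intro T hT
    have n1 : (0:ℝ) ≤ (Real.sqrt |x|)⁻¹ := by positivity
    have n2 : (0:ℝ) ≤ (Real.sqrt |x - a|)⁻¹ := by positivity
    have n3 : (0:ℝ) ≤ (Real.sqrt |x - 1|)⁻¹ := by positivity
    rw [G]
    rcases hT with h|h|h <;> rw [h] <;>
      exact mul_le_mul_of_nonneg_left (by linarith) (by positivity)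
  rw [sqrt_abs_w q hq hx]
  rcases le_or_gt x (a/2) with h1 | h1
  · have r2 : δ ≤ |x - a| := by
      rw [abs_sub_comm, _root_.abs_of_nonneg (by linarith)]; linarith
    have k1 := Real.sqrt_le_sqrt (show δ ≤ 1 - x by linarith)
    have k2 := Real.sqrt_le_sqrt r2
    have hAB : δ ≤ Real.sqrt (1-x) * Real.sqrt |x - a| := by
      nlinarith [mul_le_mul k1 k2 (Real.sqrt_nonneg δ) (Real.sqrt_nonneg (1-x)), sδ]
    have hbig : δ ≤ Real.sqrt (1-x) * (Real.sqrt q * Real.sqrt |x - a|) := by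
      nlinarith [mul_le_mul_of_nonneg_right hq1
        (mul_nonneg (Real.sqrt_nonneg (1-x)) (Real.sqrt_nonneg |x - a|)), hAB]
    calc (Real.sqrt x * (Real.sqrt (1-x) * (Real.sqrt q * Real.sqrt |x - a|)))⁻¹
        ≤ δ⁻¹ * (Real.sqrt x)⁻¹ := inv_mul_bound (Real.sqrt_nonneg x) hδ hbig
      _ = δ⁻¹ * (Real.sqrt |x|)⁻¹ := by rw [_root_.abs_of_pos hx.1]
      _ ≤ G q x := hGsplit _ (Or.inl rfl)
  rcases le_or_gt x ((1+a)/2) with h2 | h2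
  · have k1 := Real.sqrt_le_sqrt (show δ ≤ x by linarith)
    have k2 := Real.sqrt_le_sqrt (show δ ≤ 1 - x by linarith)
    have hbig : δ ≤ Real.sqrt x * Real.sqrt (1-x) := by
      nlinarith [mul_le_mul k1 k2 (Real.sqrt_nonneg δ) (Real.sqrt_nonneg x), sδ]
    calc (Real.sqrt x * (Real.sqrt (1-x) * (Real.sqrt q * Real.sqrt |x - a|)))⁻¹
        = ((Real.sqrt q * Real.sqrt x * Real.sqrt (1-x)) * Real.sqrt |x - a|)⁻¹ := by
          ring_nf
      _ ≤ δ⁻¹ * (Real.sqrt |x - a|)⁻¹ := by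
          rw [mul_comm (Real.sqrt q * Real.sqrt x * Real.sqrt (1-x)) (Real.sqrt |x-a|)]
          apply inv_mul_bound (Real.sqrt_nonneg _) hδ
          nlinarith [mul_le_mul_of_nonneg_right hq1
            (mul_nonneg (Real.sqrt_nonneg x) (Real.sqrt_nonneg (1-x))), hbig]
      _ ≤ G q x := hGsplit _ (Or.inr (Or.inl rfl))
  · have k1 := Real.sqrt_le_sqrt (show δ ≤ x by linarith)
    have k2 := Real.sqrt_le_sqrt (show δ ≤ |x - a| by
      rw [_root_.abs_of_nonneg (by linarith)]; linarith)
    have e1x : Real.sqrt (1-x) = Real.sqrt |x - 1| := by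
      rw [abs_sub_comm, _root_.abs_of_nonneg (by linarith [hx.2])]
    calc (Real.sqrt x * (Real.sqrt (1-x) * (Real.sqrt q * Real.sqrt |x - a|)))⁻¹
        = ((Real.sqrt x * (Real.sqrt q * Real.sqrt |x-a|)) * Real.sqrt (1-x))⁻¹ := by
          ring_nf
      _ ≤ δ⁻¹ * (Real.sqrt (1-x))⁻¹ := by
          rw [mul_comm (Real.sqrt x * (Real.sqrt q * Real.sqrt |x-a|)) (Real.sqrt (1-x))]
          apply inv_mul_bound (Real.sqrt_nonneg _) hδ
          have hAB : δ ≤ Real.sqrt x * Real.sqrt |x - a| := by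
            nlinarith [mul_le_mul k1 k2 (Real.sqrt_nonneg δ) (Real.sqrt_nonneg x), sδ]
          nlinarith [mul_le_mul_of_nonneg_right hq1
            (mul_nonneg (Real.sqrt_nonneg x) (Real.sqrt_nonneg |x - a|)), hAB]
      _ = δ⁻¹ * (Real.sqrt |x - 1|)⁻¹ := by rw [e1x]
      _ ≤ G q x := hGsplit _ (Or.inr (Or.inr rfl))

/-! ### facts about `P` and the integrand `F` -/

lemma P_eq (q ε x : ℝ) :
    P q ε x = ((w q x : ℝ) : ℂ) - ((ε * (x^2*(1-x)) : ℝ) : ℂ) * Complex.I := by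
  simp only [P, w]
  push_cast
  ring

lemma P_re (q ε x : ℝ) : (P q ε x).re = w q x := by
  simp only [P, w, Complex.mul_re, Complex.mul_im, Complex.add_re, Complex.add_im,
    Complex.sub_re, Complex.sub_im, Complex.one_re, Complex.one_im, Complex.I_re,
    Complex.I_im, Complex.ofReal_re, Complex.ofReal_im]
  ring

lemma P_im (q ε x : ℝ) : (P q ε x).im = -(ε * (x^2*(1-x))) := by
  simp only [P, Complex.mul_re, Complex.mul_im, Complex.add_re, Complex.add_im,
    Complex.sub_re, Complex.sub_im, Complex.one_re, Complex.one_im, Complex.I_re,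
    Complex.I_im, Complex.ofReal_re, Complex.ofReal_im]
  ring

lemma abs_P_ge (q ε x : ℝ) : |w q x| ≤ ‖P q ε x‖ := by
  have := Complex.abs_re_le_norm (P q ε x)
  rwa [P_re] at this

lemma P_im_neg (q : ℝ) {ε x : ℝ} (hε : 0 < ε) (hx : x ∈ Ioo (0:ℝ) 1) :
    (P q ε x).im < 0 := by
  rw [P_im]
  have : 0 < ε * (x^2*(1-x)) :=
    mul_pos hε (mul_pos (pow_pos hx.1 2) (by linarith [hx.2] : (0:ℝ) < 1 - x))
  linarith

lemma P_ne_zero (q : ℝ) {ε x : ℝ} (hε : 0 < ε) (hx : x ∈ Ioo (0:ℝ) 1) :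
    P q ε x ≠ 0 := by
  intro h
  have := P_im_neg q hε hx
  rw [h] at this
  simp at this

lemma num_eq (q ε x : ℝ) :
    1 + (1 - 2*(x:ℂ))*((q:ℂ) + (ε:ℂ)*Complex.I)
      = ((N q x : ℝ) : ℂ) + (((1 - 2*x)*ε : ℝ) : ℂ) * Complex.I := by
  simp only [N]; push_cast; ring

lemma num_abs_le (q : ℝ) (hq : 1 < q) {ε x : ℝ} (hε : ε ∈ Ioc (0:ℝ) 1)
    (hx : x ∈ Ioc (0:ℝ) 1) :
    ‖1 + (1 - 2*(x:ℂ))*((q:ℂ) + (ε:ℂ)*Complex.I)‖ ≤ 2 + q := by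
  rw [num_eq]
  refine le_trans (norm_add_le _ _) ?_
  rw [norm_mul, Complex.norm_I, mul_one, Complex.norm_real, Complex.norm_real, Real.norm_eq_abs,
    Real.norm_eq_abs]
  have h1 : |1 - 2*x| ≤ 1 := by
    rw [abs_le]; constructor <;> [linarith [hx.2]; linarith [hx.1]]
  have h2 : |N q x| ≤ 1 + q := by
    rw [N, abs_le]
    have hq0 : (0:ℝ) < q := by linarith
    constructor <;> nlinarith [abs_le.1 h1]
  have h3 : |(1 - 2*x)*ε| ≤ 1 := by
    rw [abs_mul]
    have : |ε| ≤ 1 := by rw [_root_.abs_of_pos hε.1]; exact hε.2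
    nlinarith [abs_nonneg (1-2*x), abs_nonneg ε]
  linarith

lemma norm_F_le (q : ℝ) (hq : 1 < q) {ε x : ℝ} (hε : ε ∈ Ioc (0:ℝ) 1)
    (hx : x ∈ Ioc (0:ℝ) 1) (hxa : x ≠ q⁻¹) :
    ‖F q ε x‖ ≤ (2 + q) * (Real.sqrt |w q x|)⁻¹ := by
  rcases eq_or_lt_of_le hx.2 with h1 | h1
  · have hP : P q ε 1 = 0 := by simp [P]
    have : F q ε x = 0 := by
      rw [F, h1.symm] at *
      rw [hP]
      simp [Complex.zero_cpow (by norm_num : (1:ℂ)/2 ≠ 0)]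
    rw [this, norm_zero]
    positivity
  have hx' : x ∈ Ioo (0:ℝ) 1 := ⟨hx.1, h1⟩
  have hPne := P_ne_zero q hε.1 hx'
  have hw : w q x ≠ 0 := by
    rw [w]
    have h2 : 1 - q*x ≠ 0 := by
      intro h
      apply hxa
      have hq0 : q ≠ 0 := ne_of_gt (by linarith)
      field_simp
      linarith
    exact mul_ne_zero (mul_ne_zero (ne_of_gt hx'.1) (by linarith [hx'.2])) h2
  have hwpos : 0 < |w q x| := abs_pos.2 hw
  rw [F, norm_div]
  have hden : ‖(P q ε x) ^ ((1:ℂ)/2)‖ = ‖P q ε x‖ ^ ((1:ℝ)/2) := by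
    rw [Complex.norm_cpow_of_ne_zero hPne]
    norm_num
  have hden_ge : Real.sqrt |w q x| ≤ ‖(P q ε x) ^ ((1:ℂ)/2)‖ := by
    rw [hden, Real.sqrt_eq_rpow]
    exact Real.rpow_le_rpow (abs_nonneg _) (abs_P_ge q ε x) (by norm_num)
  have hsq : 0 < Real.sqrt |w q x| := Real.sqrt_pos.2 hwpos
  calc ‖1 + (1 - 2*(x:ℂ))*((q:ℂ) + (ε:ℂ)*Complex.I)‖ / ‖(P q ε x) ^ ((1:ℂ)/2)‖
      ≤ (2 + q) / Real.sqrt |w q x| := by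
        apply div_le_div₀ (by linarith) _ hsq hden_ge
        exact num_abs_le q hq hε hx
    _ = (2 + q) * (Real.sqrt |w q x|)⁻¹ := div_eq_mul_inv _ _

/-! ### pointwise limits -/

lemma exp_half_log {s : ℝ} (hs : 0 < s) : Real.exp (Real.log s / 2) = Real.sqrt s := by
  rw [Real.sqrt_eq_rpow, Real.rpow_def_of_pos hs]
  ring_nf

lemma tendsto_P (q x : ℝ) :
    Tendsto (fun ε : ℝ => P q ε x) (𝓝[>] 0) (𝓝 ((w q x : ℝ) : ℂ)) := by
  have hc : Continuous (fun ε : ℝ => P q ε x) := by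
    unfold P
    fun_prop
  have h0 : P q 0 x = ((w q x : ℝ) : ℂ) := by
    simp only [P, w]
    push_cast
    ring
  have := hc.continuousAt (x := (0:ℝ))
  rw [ContinuousAt, h0] at this
  exact this.mono_left nhdsWithin_le_nhds

lemma tendsto_num (q x : ℝ) :
    Tendsto (fun ε : ℝ => 1 + (1 - 2*(x:ℂ))*((q:ℂ) + (ε:ℂ)*Complex.I)) (𝓝[>] 0)
      (𝓝 ((N q x : ℝ) : ℂ)) := by
  have hc : Continuous (fun ε : ℝ => 1 + (1 - 2*(x:ℂ))*((q:ℂ) + (ε:ℂ)*Complex.I)) := by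
    fun_prop
  have h0 : 1 + (1 - 2*(x:ℂ))*((q:ℂ) + ((0:ℝ):ℂ)*Complex.I) = ((N q x : ℝ) : ℂ) := by
    simp only [N]; push_cast; ring
  have := hc.continuousAt (x := (0:ℝ))
  rw [ContinuousAt, h0] at this
  exact this.mono_left nhdsWithin_le_nhds

lemma tendsto_F_lt (q : ℝ) (hq : 1 < q) {x : ℝ} (hx : x ∈ Ioo (0:ℝ) 1) (hxa : x < q⁻¹) :
    Tendsto (fun ε : ℝ => F q ε x) (𝓝[>] 0) (𝓝 (f₀ q x)) := by
  have hw : 0 < w q x := by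
    have h2 : 0 < 1 - q*x := by
      have hq0 : (0:ℝ) < q := by linarith
      have := (mul_lt_mul_iff_right₀ hq0).2 hxa
      rw [mul_inv_cancel₀ (ne_of_gt hq0)] at this
      linarith
    exact mul_pos (mul_pos hx.1 (by linarith [hx.2])) h2
  have hslit : ((w q x : ℝ) : ℂ) ∈ Complex.slitPlane := by
    left
    simpa using hw
  have hden : Tendsto (fun ε : ℝ => (P q ε x) ^ ((1:ℂ)/2)) (𝓝[>] 0)
      (𝓝 (((Real.sqrt (w q x) : ℝ) : ℂ))) := by
    have := (tendsto_P q x).cpow (tendsto_const_nhds (x := (1:ℂ)/2)) hslit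
    convert this using 2
    rw [Real.sqrt_eq_rpow, Complex.ofReal_cpow hw.le]
    norm_num
  have hsq : ((Real.sqrt (w q x) : ℝ) : ℂ) ≠ 0 := by
    simp only [ne_eq, Complex.ofReal_eq_zero]
    exact ne_of_gt (Real.sqrt_pos.2 hw)
  have := (tendsto_num q x).div hden hsq
  have heq : f₀ q x = ((N q x : ℝ) : ℂ) / ((Real.sqrt (w q x) : ℝ) : ℂ) := by
    rw [f₀, if_pos hxa.le]
    push_cast
    ring
  rw [heq]
  exact this

lemma tendsto_F_gt (q : ℝ) (hq : 1 < q) {x : ℝ} (hx : x ∈ Ioo (0:ℝ) 1) (hxa : q⁻¹ < x) :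
    Tendsto (fun ε : ℝ => F q ε x) (𝓝[>] 0) (𝓝 (f₀ q x)) := by
  have hq0 : (0:ℝ) < q := by linarith
  have hw : w q x < 0 := by
    have h2 : 1 - q*x < 0 := by
      have := (mul_lt_mul_iff_right₀ hq0).2 hxa
      rw [mul_inv_cancel₀ (ne_of_gt hq0)] at this
      linarith
    have h3 : 0 < x * (1-x) := mul_pos hx.1 (by linarith [hx.2])
    rw [w]
    exact mul_neg_of_pos_of_neg h3 h2
  have hlog : Tendsto (fun ε : ℝ => Complex.log (P q ε x)) (𝓝[>] 0)
      (𝓝 ((Real.log (-(w q x)) : ℝ) - (Real.pi : ℝ) * Complex.I)) := by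
    have h1 : Tendsto (fun ε : ℝ => P q ε x) (𝓝[>] 0)
        (𝓝[{z : ℂ | z.im < 0}] ((w q x : ℝ) : ℂ)) := by
      apply tendsto_nhdsWithin_of_tendsto_nhds_of_eventually_within _ (tendsto_P q x)
      filter_upwards [self_mem_nhdsWithin] with ε (hε : 0 < ε)
      exact P_im_neg q hε hx
    have h2 := Complex.tendsto_log_nhdsWithin_im_neg_of_re_neg_of_im_zero
      (z := ((w q x : ℝ) : ℂ)) (by simpa using hw) (by simp)
    have h3 := h2.comp h1
    convert h3 using 2
    · rfl
    rw [Complex.norm_real, Real.norm_eq_abs, _root_.abs_of_neg hw]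
  have hden : Tendsto (fun ε : ℝ => (P q ε x) ^ ((1:ℂ)/2)) (𝓝[>] 0)
      (𝓝 (-Complex.I * ((Real.sqrt (-(w q x)) : ℝ) : ℂ))) := by
    have h4 : Tendsto (fun ε : ℝ => Complex.exp (Complex.log (P q ε x) * ((1:ℂ)/2)))
        (𝓝[>] 0) (𝓝 (Complex.exp (((Real.log (-(w q x)) : ℝ) - (Real.pi : ℝ) * Complex.I) * ((1:ℂ)/2)))) := by
      exact (Complex.continuous_exp.continuousAt.tendsto.comp (hlog.mul tendsto_const_nhds))
    have heq : Complex.exp (((Real.log (-(w q x)) : ℝ) - (Real.pi : ℝ) * Complex.I) * ((1:ℂ)/2))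
        = -Complex.I * ((Real.sqrt (-(w q x)) : ℝ) : ℂ) := by
      have e1 : (((Real.log (-(w q x)) : ℝ) : ℂ) - (Real.pi : ℝ) * Complex.I) * ((1:ℂ)/2)
          = ((Real.log (-(w q x)) / 2 : ℝ) : ℂ) + ((-(Real.pi/2) : ℝ) : ℂ) * Complex.I := by
        push_cast
        ring
      rw [e1, Complex.exp_add, ← Complex.ofReal_exp, exp_half_log (by linarith : 0 < -(w q x)),
        Complex.exp_mul_I, ← Complex.ofReal_cos, ← Complex.ofReal_sin,
        Real.cos_neg, Real.sin_neg, Real.cos_pi_div_two, Real.sin_pi_div_two]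
      push_cast
      ring
    rw [← heq] at *
    apply h4.congr'
    filter_upwards [self_mem_nhdsWithin] with ε (hε : 0 < ε)
    rw [Complex.cpow_def_of_ne_zero (P_ne_zero q hε hx)]
  have hsqne : (-Complex.I * ((Real.sqrt (-(w q x)) : ℝ) : ℂ)) ≠ 0 := by
    apply mul_ne_zero
    · simp [Complex.I_ne_zero]
    · simp only [ne_eq, Complex.ofReal_eq_zero]
      exact ne_of_gt (Real.sqrt_pos.2 (by linarith))
  have := (tendsto_num q x).div hden hsqne
  have heq2 : f₀ q x = ((N q x : ℝ) : ℂ) / (-Complex.I * ((Real.sqrt (-(w q x)) : ℝ) : ℂ)) := by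
    rw [f₀, if_neg (not_le.2 hxa)]
    have hs : ((Real.sqrt (-(w q x)) : ℝ) : ℂ) ≠ 0 := by
      simp only [ne_eq, Complex.ofReal_eq_zero]
      exact ne_of_gt (Real.sqrt_pos.2 (by linarith))
    rw [eq_div_iff hsqne, Complex.ofReal_div]
    have hii : Complex.I * -Complex.I = 1 := by
      rw [mul_neg, Complex.I_mul_I]; ring
    calc Complex.I * (((N q x : ℝ):ℂ) / ((Real.sqrt (-(w q x)) : ℝ):ℂ))
          * (-Complex.I * ((Real.sqrt (-(w q x)) : ℝ):ℂ))
        = (Complex.I * -Complex.I) *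
          ((((N q x : ℝ):ℂ) / ((Real.sqrt (-(w q x)) : ℝ):ℂ)) * ((Real.sqrt (-(w q x)) : ℝ):ℂ)) := by
          ring
      _ = ((N q x : ℝ):ℂ) := by rw [hii, div_mul_cancel₀ _ hs, one_mul]
  rw [heq2]
  exact this

/-! ### measurability -/

lemma measurable_cpow_const (c : ℂ) : Measurable (fun z : ℂ => z ^ c) := by
  have e : (fun z : ℂ => z ^ c)
      = fun z => if z = 0 then (if c = 0 then 1 else 0) else Complex.exp (Complex.log z * c) := by
    funext z
    exact Complex.cpow_def z c
  rw [e]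
  have hset : MeasurableSet {z : ℂ | z = 0} := by
    have : {z : ℂ | z = 0} = {0} := by ext; simp
    rw [this]
    exact measurableSet_singleton 0
  exact Measurable.ite hset measurable_const
    (Complex.measurable_exp.comp (Complex.measurable_log.mul_const c))

lemma F_meas (q ε : ℝ) {s : Set ℝ} :
    AEStronglyMeasurable (F q ε) (volume.restrict s) := by
  apply Measurable.aestronglyMeasurable
  apply Measurable.div
  · fun_prop
  · exact (measurable_cpow_const ((1:ℂ)/2)).comp (by unfold P; fun_prop)

lemma f₀_meas (q : ℝ) {s : Set ℝ} :
    AEStronglyMeasurable (f₀ q) (volume.restrict s) := by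
  apply Measurable.aestronglyMeasurable
  unfold f₀
  apply Measurable.ite (measurableSet_le measurable_id measurable_const)
  · apply Complex.measurable_ofReal.comp
    apply Measurable.div
    · unfold N; fun_prop
    · exact (Real.continuous_sqrt.measurable).comp (by unfold w; fun_prop)
  · apply Measurable.const_mul
    apply Complex.measurable_ofReal.comp
    apply Measurable.div
    · unfold N; fun_prop
    · exact (Real.continuous_sqrt.measurable).comp (by unfold w; fun_prop)

lemma h_meas (q : ℝ) {s : Set ℝ} :
    AEStronglyMeasurable (h q) (volume.restrict s) := by
  apply Measurable.aestronglyMeasurable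
  unfold h
  apply Measurable.div
  · unfold N; fun_prop
  · exact (Real.continuous_sqrt.measurable).comp (by unfold w; fun_prop)

/-! ### norm of the limit function -/

lemma aux_div_le {Nv wv c : ℝ} (hN : |Nv| ≤ c) : |Nv| / Real.sqrt wv ≤ c * (Real.sqrt |wv|)⁻¹ := by
  have hc : 0 ≤ c := le_trans (abs_nonneg _) hN
  rcases lt_trichotomy wv 0 with hw|hw|hw
  · rw [Real.sqrt_eq_zero_of_nonpos hw.le, div_zero]
    positivity
  · subst hw
    norm_num
  · rw [_root_.abs_of_pos hw, div_eq_mul_inv]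
    exact mul_le_mul hN le_rfl (by positivity) hc

lemma aux_div_le_neg {Nv wv c : ℝ} (hN : |Nv| ≤ c) :
    |Nv| / Real.sqrt (-wv) ≤ c * (Real.sqrt |wv|)⁻¹ := by
  have := aux_div_le (wv := -wv) hN
  rwa [abs_neg] at this

lemma norm_f₀_le (q : ℝ) (hq : 1 < q) {x : ℝ} (hx : x ∈ Ioc (0:ℝ) 1) (hxa : x ≠ q⁻¹) :
    ‖f₀ q x‖ ≤ (2 + q) * G q x := by
  have hNle : |N q x| ≤ 2 + q := by
    have h1 : |1 - 2*x| ≤ 1 := by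
      rw [abs_le]; constructor <;> [linarith [hx.2]; linarith [hx.1]]
    rw [N, abs_le]
    constructor <;> nlinarith [abs_le.1 h1, hq]
  have key : ‖f₀ q x‖ ≤ (2 + q) * (Real.sqrt |w q x|)⁻¹ := by
    rcases le_or_gt x q⁻¹ with hle | hgt
    · rw [f₀, if_pos hle]
      have hw0 : 0 ≤ w q x := by
        rw [w]
        have h2 : 0 ≤ 1 - q*x := by
          have hq0 : (0:ℝ) < q := by linarith
          have := mul_le_mul_of_nonneg_left hle hq0.le
          rw [mul_inv_cancel₀ (ne_of_gt hq0)] at this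
          linarith
        have := hx.1
        have h3 : (0:ℝ) ≤ 1 - x := by linarith [hx.2]
        positivity
      rw [Complex.norm_real, Real.norm_eq_abs, abs_div,
        _root_.abs_of_nonneg (Real.sqrt_nonneg _)]
      exact aux_div_le hNle
    · rw [f₀, if_neg (not_le.2 hgt)]
      rw [norm_mul, Complex.norm_I, one_mul, Complex.norm_real, Real.norm_eq_abs, abs_div,
        _root_.abs_of_nonneg (Real.sqrt_nonneg _)]
      exact aux_div_le_neg hNle
  refine le_trans key ?_
  exact mul_le_mul_of_nonneg_left (w_dom q hq hx) (by linarith)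

lemma abs_h_le (q : ℝ) (hq : 1 < q) {x : ℝ} (hx : x ∈ Ioc (0:ℝ) 1) (hxa : x ≠ q⁻¹) :
    |h q x| ≤ (2 + q) * G q x := by
  have hNle : |N q x| ≤ 2 + q := by
    have h1 : |1 - 2*x| ≤ 1 := by
      rw [abs_le]; constructor <;> [linarith [hx.2]; linarith [hx.1]]
    rw [N, abs_le]
    constructor <;> nlinarith [abs_le.1 h1, hq]
  have key : |h q x| ≤ (2 + q) * (Real.sqrt |w q x|)⁻¹ := by
    rw [h, abs_div, _root_.abs_of_nonneg (Real.sqrt_nonneg _)]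
    exact aux_div_le_neg hNle
  refine le_trans key ?_
  exact mul_le_mul_of_nonneg_left (w_dom q hq hx) (by linarith)

/-! ### integrability consequences -/

lemma bound_integrable {q : ℝ} (hq : 1 < q) (u v : ℝ) :
    IntervalIntegrable (fun x => (2 + q) * G q x) volume u v :=
  (G_integrable hq u v).const_mul (2 + q)

lemma ae_ne (c : ℝ) : ∀ᵐ x : ℝ ∂(volume : Measure ℝ), x ≠ c := by
  rw [MeasureTheory.ae_iff]
  have : {x : ℝ | ¬ x ≠ c} = {c} := by ext; simp
  rw [this]
  exact measure_singleton c

lemma f₀_integrable {q : ℝ} (hq : 1 < q) {u v : ℝ} (huv : Icc u v ⊆ Icc 0 1) (hle : u ≤ v) :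
    IntervalIntegrable (f₀ q) volume u v := by
  refine (bound_integrable hq u v).mono_fun (f₀_meas q) ?_
  have h1 : ∀ᵐ x : ℝ ∂(volume.restrict (Set.uIoc u v)), x ≠ q⁻¹ := ae_restrict_of_ae (ae_ne q⁻¹)
  filter_upwards [ae_restrict_mem measurableSet_uIoc, h1] with x hx hxa
  rw [uIoc_of_le hle] at hx
  have hx01 : x ∈ Ioc (0:ℝ) 1 := by
    have hu0 : 0 ≤ u := (huv ⟨le_refl u, hle⟩).1
    exact ⟨lt_of_le_of_lt hu0 hx.1, (huv ⟨hx.1.le, hx.2⟩).2⟩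
  have hGn : 0 ≤ (2+q) * G q x := mul_nonneg (by linarith) (G_nonneg hq x)
  rw [Real.norm_eq_abs ((2+q) * G q x), _root_.abs_of_nonneg hGn]
  exact norm_f₀_le q hq hx01 hxa

lemma h_integrable {q : ℝ} (hq : 1 < q) {u v : ℝ} (huv : Icc u v ⊆ Icc 0 1) (hle : u ≤ v) :
    IntervalIntegrable (h q) volume u v := by
  refine (bound_integrable hq u v).mono_fun (h_meas q) ?_
  have h1 : ∀ᵐ x : ℝ ∂(volume.restrict (Set.uIoc u v)), x ≠ q⁻¹ := ae_restrict_of_ae (ae_ne q⁻¹)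
  filter_upwards [ae_restrict_mem measurableSet_uIoc, h1] with x hx hxa
  rw [uIoc_of_le hle] at hx
  have hx01 : x ∈ Ioc (0:ℝ) 1 := by
    have hu0 : 0 ≤ u := (huv ⟨le_refl u, hle⟩).1
    exact ⟨lt_of_le_of_lt hu0 hx.1, (huv ⟨hx.1.le, hx.2⟩).2⟩
  have hGn : 0 ≤ (2+q) * G q x := mul_nonneg (by linarith) (G_nonneg hq x)
  rw [Real.norm_eq_abs, Real.norm_eq_abs, _root_.abs_of_nonneg hGn]
  exact abs_h_le q hq hx01 hxa

/-! ### main convergence -/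

lemma main_tendsto (q : ℝ) (hq : 1 < q) :
    Tendsto (fun ε : ℝ => ∫ x in (0:ℝ)..1, F q ε x) (𝓝[>] 0)
      (𝓝 (∫ x in (0:ℝ)..1, f₀ q x)) := by
  apply intervalIntegral.tendsto_integral_filter_of_dominated_convergence
    (fun x => (2+q) * G q x)
  · exact Eventually.of_forall (fun ε => F_meas q ε)
  · filter_upwards [Ioc_mem_nhdsGT (by norm_num : (0:ℝ) < 1)] with ε hε
    filter_upwards [ae_ne q⁻¹] with x hxa hx
    rw [Set.uIoc_of_le (by norm_num : (0:ℝ) ≤ 1)] at hx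
    exact le_trans (norm_F_le q hq hε hx hxa)
      (mul_le_mul_of_nonneg_left (w_dom q hq hx) (by linarith))
  · exact bound_integrable hq 0 1
  · filter_upwards [ae_ne q⁻¹, ae_ne 1] with x hxa hx1 hx
    rw [Set.uIoc_of_le (by norm_num : (0:ℝ) ≤ 1)] at hx
    have hxo : x ∈ Ioo (0:ℝ) 1 := ⟨hx.1, lt_of_le_of_ne hx.2 hx1⟩
    rcases lt_or_gt_of_ne hxa with hlt | hgt
    · exact tendsto_F_lt q hq hxo hlt
    · exact tendsto_F_gt q hq hxo hgt

lemma J_eq (q ε : ℝ) : J ((q:ℂ) + (ε:ℂ)*Complex.I) = ∫ x in (0:ℝ)..1, F q ε x := rfl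

lemma f₀_at_a (q : ℝ) (hq : 1 < q) : f₀ q q⁻¹ = 0 ∧ Complex.I * ((h q q⁻¹ : ℝ) : ℂ) = 0 := by
  have hq0 : (0:ℝ) < q := by linarith
  have hwa : w q q⁻¹ = 0 := by
    rw [w, mul_inv_cancel₀ (ne_of_gt hq0)]
    ring
  constructor
  · rw [f₀, if_pos le_rfl, hwa, Real.sqrt_zero, div_zero, Complex.ofReal_zero]
  · rw [h, hwa, neg_zero, Real.sqrt_zero, div_zero, Complex.ofReal_zero, mul_zero]

lemma integral_f₀ (q : ℝ) (hq : 1 < q) :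
    (∫ x in (0:ℝ)..1, f₀ q x)
      = (((∫ x in (0:ℝ)..q⁻¹, N q x / Real.sqrt (w q x)) : ℝ) : ℂ)
        + Complex.I * (((∫ x in q⁻¹..1, h q x) : ℝ) : ℂ) := by
  have ha0 := a_pos hq
  have ha1 := a_lt_one hq
  have i1 : IntervalIntegrable (f₀ q) volume 0 q⁻¹ :=
    f₀_integrable hq (Icc_subset_Icc le_rfl ha1.le) ha0.le
  have i2 : IntervalIntegrable (f₀ q) volume q⁻¹ 1 :=
    f₀_integrable hq (Icc_subset_Icc ha0.le le_rfl) ha1.le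
  rw [← intervalIntegral.integral_add_adjacent_intervals i1 i2]
  congr 1
  · rw [show (∫ x in (0:ℝ)..q⁻¹, f₀ q x)
        = ∫ x in (0:ℝ)..q⁻¹, ((N q x / Real.sqrt (w q x) : ℝ) : ℂ) from
      intervalIntegral.integral_congr ?_, intervalIntegral.integral_ofReal]
    intro x hx
    rw [Set.uIcc_of_le ha0.le] at hx
    rw [f₀, if_pos hx.2]
  · rw [show (∫ x in q⁻¹..1, f₀ q x)
        = ∫ x in q⁻¹..1, Complex.I * ((h q x : ℝ) : ℂ) from
      intervalIntegral.integral_congr ?_, intervalIntegral.integral_const_mul,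
      intervalIntegral.integral_ofReal]
    intro x hx
    rw [Set.uIcc_of_le ha1.le] at hx
    show f₀ q x = Complex.I * ((h q x : ℝ) : ℂ)
    rcases eq_or_lt_of_le hx.1 with he | hl
    · rw [← he, (f₀_at_a q hq).1, (f₀_at_a q hq).2]
    · rw [f₀, if_neg (not_le.2 hl), h]

/-! ### positivity -/

lemma L_pos (q : ℝ) (hq : 1 < q) : 0 < ∫ x in q⁻¹..1, h q x := by
  have hq0 : (0:ℝ) < q := by linarith
  set a := q⁻¹ with hadef
  have hqa : q * a = 1 := mul_inv_cancel₀ (ne_of_gt hq0)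
  have ha0 : 0 < a := a_pos hq
  have ha1 : a < 1 := a_lt_one hq
  set m := (a+1)/2 with hmdef
  have ham : a < m := by rw [hmdef]; linarith
  have hm1 : m < 1 := by rw [hmdef]; linarith
  have hint : IntervalIntegrable (h q) volume a 1 :=
    h_integrable hq (Icc_subset_Icc ha0.le le_rfl) ha1.le
  have h1 : IntervalIntegrable (h q) volume a m := by
    apply hint.mono_set
    rw [Set.uIcc_of_le (by linarith), Set.uIcc_of_le (by linarith)]
    exact Icc_subset_Icc le_rfl (by linarith)
  have h2 : IntervalIntegrable (h q) volume m 1 := by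
    apply hint.mono_set
    rw [Set.uIcc_of_le (by linarith), Set.uIcc_of_le (by linarith)]
    exact Icc_subset_Icc (by linarith) le_rfl
  have hrefl : IntervalIntegrable (fun y => h q (a+1-y)) volume a m := by
    have h3 := h2.comp_sub_left (a+1)
    have e1 : a + 1 - m = m := by rw [hmdef]; ring
    have e2 : a + 1 - 1 = a := by ring
    rw [e1, e2] at h3
    exact h3.symm
  have hreflint : (∫ x in a..m, h q (a+1-x)) = ∫ x in m..1, h q x := by
    have := intervalIntegral.integral_comp_sub_left (a := a) (b := m) (h q) (a+1)
    rw [show a + 1 - m = m by rw [hmdef]; ring, show a + 1 - a = 1 by ring] at this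
    exact this
  have hsplit : (∫ x in a..1, h q x) = ∫ x in a..m, (h q x + h q (a+1-x)) := by
    rw [← intervalIntegral.integral_add_adjacent_intervals h1 h2, ← hreflint,
      ← intervalIntegral.integral_add h1 hrefl]
  rw [hsplit]
  apply intervalIntegral.intervalIntegral_pos_of_pos_on (h1.add hrefl) _ ham
  intro y hy
  have hya : a < y := hy.1
  have hym : y < m := hy.2
  have hy1 : y < 1 := lt_trans hym hm1
  have hy0 : 0 < y := lt_trans ha0 hya
  have hNy : 0 < N q y := by
    rw [N]
    nlinarith [hqa]
  have hNz : N q (a+1-y) = - N q y := by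
    rw [N, N]
    linear_combination (-2 : ℝ) * hqa
  have wy : -(w q y) = q * (y * (1-y) * (y - a)) := by
    rw [w]
    linear_combination (y*(1-y)) * hqa
  have wz : -(w q (a+1-y)) = q * ((a+1-y) * (1-y) * (y - a)) := by
    rw [w]
    linear_combination ((a+1-y)*(y-a)) * hqa
  have pos1 : 0 < q * (y * (1-y) * (y - a)) :=
    mul_pos hq0 (mul_pos (mul_pos hy0 (by linarith)) (by linarith))
  have hlt : q * (y * (1-y) * (y - a)) < q * ((a+1-y) * (1-y) * (y - a)) := by
    have key : 0 < q * ((1-y) * ((y-a) * ((a+1-y) - y))) := by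
      apply mul_pos hq0
      apply mul_pos (by linarith)
      apply mul_pos (by linarith)
      have : y < (a+1)/2 := hym
      linarith
    have e : q * ((a+1-y) * (1-y) * (y - a)) - q * (y * (1-y) * (y - a))
        = q * ((1-y) * ((y-a) * ((a+1-y) - y))) := by ring
    linarith
  have sq1pos : 0 < Real.sqrt (-(w q y)) := Real.sqrt_pos.2 (by rw [wy]; exact pos1)
  have sqlt : Real.sqrt (-(w q y)) < Real.sqrt (-(w q (a+1-y))) := by
    rw [wy, wz]
    exact Real.sqrt_lt_sqrt pos1.le hlt
  have hinv : (Real.sqrt (-(w q (a+1-y))))⁻¹ < (Real.sqrt (-(w q y)))⁻¹ := by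
    apply inv_strictAnti₀ sq1pos sqlt
  have e2 : h q y + h q (a+1-y)
      = N q y * ((Real.sqrt (-(w q y)))⁻¹ - (Real.sqrt (-(w q (a+1-y))))⁻¹) := by
    rw [h, h, hNz, div_eq_mul_inv, div_eq_mul_inv]
    ring
  rw [e2]
  exact mul_pos hNy (sub_pos.2 hinv)

end
end JAux

/-- For real `q > 1`, the imaginary part of the boundary value of `J` from the upper
half-plane is strictly positive. -/
theorem J_boundary_im_pos (q : ℝ) (hq : 1 < q) :
    ∃ L : ℝ, 0 < L ∧
      Tendsto (fun ε : ℝ => (J ((q : ℂ) + (ε : ℂ) * Complex.I)).im)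
        (nhdsWithin 0 (Set.Ioi 0)) (nhds L) := by
  refine ⟨∫ x in q⁻¹..1, JAux.h q x, JAux.L_pos q hq, ?_⟩
  have T := JAux.main_tendsto q hq
  have T2 := (Complex.continuous_im.continuousAt (x := ∫ x in (0:ℝ)..1, JAux.f₀ q x)).tendsto.comp T
  have e : (fun ε : ℝ => (J ((q : ℂ) + (ε : ℂ) * Complex.I)).im)
      = fun ε : ℝ => (∫ x in (0:ℝ)..1, JAux.F q ε x).im := by
    funext ε
    rw [JAux.J_eq]
  rw [e]
  have e2 : (∫ x in (0:ℝ)..1, JAux.f₀ q x).im = ∫ x in q⁻¹..1, JAux.h q x := by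
    rw [JAux.integral_f₀ q hq]
    simp
  rw [← e2]
  exact T2
end
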